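/- Define the (q,b)-Fibonacci polynomials F_n(x,b,s,q) = ∑_{k=0}^{⌊(n-1)/2⌋} q^{k²}·[n-1-k choose k]_q · s^k·x^{n-1-2k} / ((qb;q)_k·(q^{n-k}b;q)_k) for n ≥ 1, with F_0 = 0. Then F_n = x·F_{n-1} + (q^{n-2}s/((1-q^{n-2}b)(1-q^{n-1}b)))·F_{n-2} for all n ≥ 2. -/

import Mathlib

open Finset

noncomputable section

/-- The field `ℚ(q,b,s,x)` of rational functions. -/
abbrev K : Type := FractionRing (MvPolynomial (Fin 4) ℚ)

def q : K := algebraMap (MvPolynomial (Fin 4) ℚ) K (MvPolynomial.X 0)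
def b : K := algebraMap (MvPolynomial (Fin 4) ℚ) K (MvPolynomial.X 1)
def s : K := algebraMap (MvPolynomial (Fin 4) ℚ) K (MvPolynomial.X 2)
def x : K := algebraMap (MvPolynomial (Fin 4) ℚ) K (MvPolynomial.X 3)

/-- The q-Pochhammer symbol `(a;q)_n = ∏_{j=0}^{n-1} (1 - q^j a)`. -/
def qPoch (a : K) (n : ℕ) : K := ∏ j ∈ range n, (1 - q ^ j * a)

/-- The Gaussian binomial coefficient `[n choose k]_q`. -/
def gbinom (n k : ℕ) : K := qPoch q n / (qPoch q k * qPoch q (n - k))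

/-- The (q,b)-Fibonacci polynomials, defined by the explicit sum (2.4). -/
def qbFib (n : ℕ) : K :=
  if n = 0 then 0 else
    ∑ k ∈ range ((n - 1) / 2 + 1),
      q ^ (k ^ 2) * gbinom (n - 1 - k) k * s ^ k * x ^ (n - 1 - 2 * k) /
        (qPoch (q * b) k * qPoch (q ^ (n - k) * b) k)

/-!
Extend the summand of `F_n` by zero to all `k`; then the recursion holds term by term: the
`(k+1)`-st term of `F_n` is `x` times the `(k+1)`-st term of `F_{n-1}` plus the coefficient times
the `k`-th term of `F_{n-2}`. Writing `(q^{n-k}b;q)_k = (qb;q)_{n-1} / (qb;q)_{n-k-1}` and clearing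
the Pochhammer factors, this is the `b`-deformed `q`-Pascal rule
`(1 - q^{m+1}b)[m+1, k+1] = (1 - q^{m+k+2}b)[m, k+1] + q^{m-k}(1 - q^{k+1}b)[m, k]`,
a combination of the two ordinary `q`-Pascal rules. At the top index `n = 2k+3` the `x`-term is
absent and only Pochhammer bookkeeping remains.
-/

lemma MvPolynomial.one_sub_algebraMap_fractionRing_ne_zero {σ R : Type*} [CommRing R]
    [Nontrivial R] {p : MvPolynomial σ R} (hp : MvPolynomial.constantCoeff p = 0) :
    (1 : FractionRing (MvPolynomial σ R)) - algebraMap _ _ p ≠ 0 := by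
  rw [← map_one (algebraMap (MvPolynomial σ R) _), ← map_sub,
    map_ne_zero_iff _ (IsFractionRing.injective _ _)]
  intro h
  simpa [hp] using congrArg MvPolynomial.constantCoeff h

lemma one_sub_q_pow_succ_ne_zero (j : ℕ) : 1 - q ^ (j + 1) ≠ 0 := by
  simpa [q] using MvPolynomial.one_sub_algebraMap_fractionRing_ne_zero
    (σ := Fin 4) (R := ℚ) (p := MvPolynomial.X 0 ^ (j + 1)) (by simp)

lemma one_sub_q_pow_mul_b_ne_zero (j : ℕ) : 1 - q ^ j * b ≠ 0 := by
  have h := MvPolynomial.one_sub_algebraMap_fractionRing_ne_zero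
    (σ := Fin 4) (R := ℚ) (p := MvPolynomial.X 0 ^ j * MvPolynomial.X 1) (by simp)
  rwa [map_mul, map_pow] at h

lemma one_sub_b_mul_q_pow_ne_zero (j : ℕ) : 1 - b * q ^ j ≠ 0 := by
  rw [mul_comm]
  exact one_sub_q_pow_mul_b_ne_zero j

@[simp]
lemma qPoch_zero (a : K) : qPoch a 0 = 1 := prod_range_zero _

lemma qPoch_succ (a : K) (n : ℕ) : qPoch a (n + 1) = qPoch a n * (1 - q ^ n * a) :=
  prod_range_succ _ _

lemma qPoch_add (a : K) (m n : ℕ) : qPoch a (m + n) = qPoch a m * qPoch (q ^ m * a) n := by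
  simp only [qPoch, prod_range_add, pow_add]
  ring_nf

lemma qPoch_q_succ (n : ℕ) : qPoch q (n + 1) = qPoch q n * (1 - q ^ (n + 1)) := by
  rw [qPoch_succ, pow_succ]

lemma qPoch_qb_succ (n : ℕ) :
    qPoch (q * b) (n + 1) = qPoch (q * b) n * (1 - q ^ (n + 1) * b) := by
  rw [qPoch_succ, pow_succ, mul_assoc]

lemma qPoch_q_ne_zero (n : ℕ) : qPoch q n ≠ 0 := by
  induction n with
  | zero => simp
  | succ n ih => rw [qPoch_q_succ]; exact mul_ne_zero ih (one_sub_q_pow_succ_ne_zero n)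

lemma qPoch_qb_ne_zero (n : ℕ) : qPoch (q * b) n ≠ 0 := by
  induction n with
  | zero => simp
  | succ n ih => rw [qPoch_qb_succ]; exact mul_ne_zero ih (one_sub_q_pow_mul_b_ne_zero _)

lemma gbinom_self (n : ℕ) : gbinom n n = 1 := by
  rw [gbinom, Nat.sub_self, qPoch_zero, mul_one, div_self (qPoch_q_ne_zero n)]

lemma gbinom_succ_succ (k e : ℕ) :
    gbinom (k + e + 2) (k + 1) =
      gbinom (k + e + 1) k + q ^ (k + 1) * gbinom (k + e + 1) (k + 1) := by
  rw [gbinom, gbinom, gbinom, show k + e + 2 - (k + 1) = e + 1 by omega,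
    show k + e + 1 - (k + 1) = e by omega, show k + e + 1 - k = e + 1 by omega,
    qPoch_q_succ (k + e + 1), qPoch_q_succ k, qPoch_q_succ e]
  field_simp [qPoch_q_ne_zero, one_sub_q_pow_succ_ne_zero]
  ring

lemma gbinom_succ_succ' (k e : ℕ) :
    gbinom (k + e + 2) (k + 1) =
      q ^ (e + 1) * gbinom (k + e + 1) k + gbinom (k + e + 1) (k + 1) := by
  rw [gbinom, gbinom, gbinom, show k + e + 2 - (k + 1) = e + 1 by omega,
    show k + e + 1 - (k + 1) = e by omega, show k + e + 1 - k = e + 1 by omega,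
    qPoch_q_succ (k + e + 1), qPoch_q_succ k, qPoch_q_succ e]
  field_simp [qPoch_q_ne_zero, one_sub_q_pow_succ_ne_zero]
  ring

lemma one_sub_mul_gbinom_succ_succ (k e : ℕ) :
    (1 - q ^ (k + e + 2) * b) * gbinom (k + e + 2) (k + 1) =
      (1 - q ^ (2 * k + e + 3) * b) * gbinom (k + e + 1) (k + 1) +
        q ^ (e + 1) * (1 - q ^ (k + 1) * b) * gbinom (k + e + 1) k := by
  linear_combination gbinom_succ_succ' k e - b * q ^ (k + e + 2) * gbinom_succ_succ k e

-- `gbinom m k` does not vanish for `k > m` (truncated subtraction), hence the explicit cutoff.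
def qbFibTerm (n k : ℕ) : K :=
  if 2 * k < n then
    q ^ (k ^ 2) * gbinom (n - 1 - k) k * s ^ k * x ^ (n - 1 - 2 * k) /
      (qPoch (q * b) k * qPoch (q ^ (n - k) * b) k)
  else 0

lemma qbFib_eq_sum_range {n N : ℕ} (h : n ≤ N) :
    qbFib n = ∑ k ∈ range N, qbFibTerm n k := by
  unfold qbFib qbFibTerm
  split_ifs with hn
  · simp [hn]
  · rw [← sum_filter]
    congr 1
    ext k
    simp only [mem_range, mem_filter]
    omega

lemma qbFibTerm_of_le {n k : ℕ} (h : n ≤ 2 * k) : qbFibTerm n k = 0 :=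
  if_neg (by omega)

lemma qbFibTerm_zero (n : ℕ) : qbFibTerm (n + 1) 0 = x ^ n := by
  simp [qbFibTerm, gbinom, div_self (qPoch_q_ne_zero _)]

lemma qbFibTerm_two_mul_add_add_one (k e : ℕ) :
    qbFibTerm (2 * k + e + 1) k =
      q ^ (k ^ 2) * gbinom (k + e) k * s ^ k * x ^ e * qPoch (q * b) (k + e) /
        (qPoch (q * b) k * qPoch (q * b) (2 * k + e)) := by
  have hsplit : qPoch (q * b) (2 * k + e) =
      qPoch (q * b) (k + e) * qPoch (q ^ (k + e + 1) * b) k := by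
    rw [show 2 * k + e = k + e + k by ring, qPoch_add, pow_succ, mul_assoc]
  rw [qbFibTerm, if_pos (by omega), show 2 * k + e + 1 - 1 - k = k + e by omega,
    show 2 * k + e + 1 - 1 - 2 * k = e by omega, show 2 * k + e + 1 - k = k + e + 1 by omega,
    hsplit]
  field_simp [qPoch_qb_ne_zero]

def qbFibRecCoeff (n : ℕ) : K := q ^ n * s / ((1 - q ^ n * b) * (1 - q ^ (n + 1) * b))

lemma qbFibTerm_succ_succ_of_lt {n k : ℕ} (h : 2 * k + 1 < n) :
    qbFibTerm (n + 2) (k + 1) =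
      x * qbFibTerm (n + 1) (k + 1) + qbFibRecCoeff n * qbFibTerm n k := by
  obtain ⟨e, rfl⟩ : ∃ e, n = 2 * k + e + 2 := ⟨n - (2 * k + 2), by omega⟩
  have hPascal : gbinom (k + e + 2) (k + 1) =
      ((1 - q ^ (2 * k + e + 3) * b) * gbinom (k + e + 1) (k + 1) +
        q ^ (e + 1) * (1 - q ^ (k + 1) * b) * gbinom (k + e + 1) k) /
          (1 - q ^ (k + e + 2) * b) := by
    rw [eq_div_iff (one_sub_q_pow_mul_b_ne_zero _), mul_comm, one_sub_mul_gbinom_succ_succ]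
  rw [show 2 * k + e + 2 + 2 = 2 * (k + 1) + (e + 1) + 1 by ring,
    show 2 * k + e + 2 + 1 = 2 * (k + 1) + e + 1 by ring,
    show 2 * k + e + 2 = 2 * k + (e + 1) + 1 by ring, qbFibTerm_two_mul_add_add_one,
    qbFibTerm_two_mul_add_add_one, qbFibTerm_two_mul_add_add_one, qbFibRecCoeff]
  simp only [show k + 1 + (e + 1) = k + e + 2 by ring,
    show 2 * (k + 1) + (e + 1) = 2 * k + e + 3 by ring, show k + 1 + e = k + e + 1 by ring,
    show 2 * (k + 1) + e = 2 * k + e + 2 by ring, show k + (e + 1) = k + e + 1 by ring,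
    show 2 * k + (e + 1) = 2 * k + e + 1 by ring,
    show 2 * k + e + 1 + 1 = 2 * k + e + 2 by ring, show 2 * k + e + 2 + 1 = 2 * k + e + 3 by ring]
  rw [hPascal, qPoch_qb_succ (k + e + 1), qPoch_qb_succ k, qPoch_qb_succ (2 * k + e + 2),
    qPoch_qb_succ (2 * k + e + 1)]
  field_simp [qPoch_qb_ne_zero, one_sub_q_pow_mul_b_ne_zero, one_sub_b_mul_q_pow_ne_zero]
  ring

lemma qbFibTerm_two_mul_add_three (k : ℕ) :
    qbFibTerm (2 * k + 1 + 2) (k + 1) = qbFibRecCoeff (2 * k + 1) * qbFibTerm (2 * k + 1) k := by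
  have hk := qbFibTerm_two_mul_add_add_one k 0
  have hk1 := qbFibTerm_two_mul_add_add_one (k + 1) 0
  simp only [add_zero, pow_zero, mul_one, gbinom_self] at hk hk1
  rw [qbFibRecCoeff, show 2 * k + 1 + 2 = 2 * (k + 1) + 1 by ring, hk, hk1,
    show 2 * (k + 1) = 2 * k + 1 + 1 by ring, qPoch_qb_succ, qPoch_qb_succ, qPoch_qb_succ]
  field_simp [qPoch_qb_ne_zero, one_sub_q_pow_mul_b_ne_zero, one_sub_b_mul_q_pow_ne_zero]
  ring

lemma qbFibTerm_succ_succ (n k : ℕ) :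
    qbFibTerm (n + 2) (k + 1) =
      x * qbFibTerm (n + 1) (k + 1) + qbFibRecCoeff n * qbFibTerm n k := by
  obtain h | rfl | h : n ≤ 2 * k ∨ n = 2 * k + 1 ∨ 2 * k + 1 < n := by omega
  · rw [qbFibTerm_of_le (by omega : n + 2 ≤ 2 * (k + 1)),
      qbFibTerm_of_le (by omega : n + 1 ≤ 2 * (k + 1)), qbFibTerm_of_le h]
    ring
  · rw [qbFibTerm_of_le (by omega : 2 * k + 1 + 1 ≤ 2 * (k + 1)), mul_zero, zero_add,
      qbFibTerm_two_mul_add_three]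
  · exact qbFibTerm_succ_succ_of_lt h

theorem qbFib_recursion (n : ℕ) (hn : 2 ≤ n) :
    qbFib n = x * qbFib (n - 1) +
      (q ^ (n - 2) * s / ((1 - q ^ (n - 2) * b) * (1 - q ^ (n - 1) * b))) * qbFib (n - 2) := by
  obtain ⟨m, rfl⟩ : ∃ m, n = m + 2 := ⟨n - 2, by omega⟩
  rw [Nat.add_sub_cancel, show m + 2 - 1 = m + 1 by omega, ← qbFibRecCoeff,
    qbFib_eq_sum_range le_rfl, qbFib_eq_sum_range (N := m + 2) (by omega),
    qbFib_eq_sum_range (N := m + 1) (by omega), sum_range_succ', sum_range_succ' _ (m + 1)]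
  simp only [qbFibTerm_succ_succ, qbFibTerm_zero, sum_add_distrib, ← mul_sum]
  ring

end
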